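/- Suppose the self-energy ΣK satisfies (iK)Π + Π(iK)~ = 0, where (iK)~(s) = (iK)(-s)ᵀ. Then the transfer function P(s) = (s + a + iK(s))⁻¹(s - a + iK(s)) with a real scalar a satisfies P Π P~ = Π, for all s where the inverses exist. -/
import Mathlib


open Matrix

/-- If the self-energy `iK` satisfies `(iK)Π + Π(iK)~ = 0` (with `(iK)~(s) = iK(-s)ᵀ`),
then the transfer function `P(s) = (s + a + iK(s))⁻¹(s - a + iK(s))` with real `a`
satisfies `P Π P~ = Π` wherever the inverses exist. -/
theorem self_energy_condition_gives_Pi_orthogonality {n : ℕ}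
    (a : ℝ) (Pim : Matrix (Fin n) (Fin n) ℂ) (hPim : IsUnit Pim)
    (iK : ℂ → Matrix (Fin n) (Fin n) ℂ)
    (hK : ∀ s, iK s * Pim + Pim * (iK (-s))ᵀ = 0)
    (P : ℂ → Matrix (Fin n) (Fin n) ℂ)
    (hP : ∀ s, P s = (s • (1 : Matrix (Fin n) (Fin n) ℂ) + (a:ℂ) • 1 + iK s)⁻¹ *
      (s • 1 - (a:ℂ) • 1 + iK s))
    (s : ℂ)
    (h₁ : IsUnit (s • (1 : Matrix (Fin n) (Fin n) ℂ) + (a:ℂ) • 1 + iK s))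
    (h₂ : IsUnit ((-s) • (1 : Matrix (Fin n) (Fin n) ℂ) + (a:ℂ) • 1 + (iK (-s))ᵀ)) :
    P s * Pim * (P (-s))ᵀ = Pim := by
  set A : Matrix (Fin n) (Fin n) ℂ := s • 1 + (a:ℂ) • 1 + iK s with hAdef
  set B : Matrix (Fin n) (Fin n) ℂ := s • 1 - (a:ℂ) • 1 + iK s with hBdef
  set C : Matrix (Fin n) (Fin n) ℂ := (-s) • 1 + (a:ℂ) • 1 + (iK (-s))ᵀ with hCdef
  set D : Matrix (Fin n) (Fin n) ℂ := (-s) • 1 - (a:ℂ) • 1 + (iK (-s))ᵀ with hDdef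
  have hdA : IsUnit A.det := (Matrix.isUnit_iff_isUnit_det _).mp h₁
  have hdC : IsUnit C.det := (Matrix.isUnit_iff_isUnit_det _).mp h₂
  have hK' : iK s * Pim = -(Pim * (iK (-s))ᵀ) := eq_neg_of_add_eq_zero_left (hK s)
  -- B * Pim = -(Pim * C)
  have hBPi : B * Pim = -(Pim * C) := by
    rw [hBdef, hCdef]
    simp only [add_mul, sub_mul, mul_add, smul_mul_assoc, mul_smul_comm, one_mul, mul_one, hK']
    module
  -- A * Pim = -(Pim * D)
  have hAPi : A * Pim = -(Pim * D) := by
    rw [hAdef, hDdef]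
    simp only [add_mul, sub_mul, mul_add, mul_sub, smul_mul_assoc, mul_smul_comm, one_mul,
      mul_one, hK']
    module
  -- C and D commute
  have hCD : C * D = D * C := by
    have : D = C - ((2 * a : ℂ)) • 1 := by
      rw [hCdef, hDdef]; module
    rw [this]
    simp only [mul_sub, sub_mul, Matrix.mul_smul, Matrix.smul_mul, mul_one, one_mul]
  -- P s expressed
  have hPs : P s = A⁻¹ * B := hP s
  -- P (-s) transpose
  have hPt : (P (-s))ᵀ = D * C⁻¹ := by
    rw [hP (-s)]
    rw [Matrix.transpose_mul, Matrix.transpose_nonsing_inv]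
    congr 1
    · rw [hDdef]
      simp [Matrix.transpose_add, Matrix.transpose_sub, Matrix.transpose_smul]
    · rw [hCdef]
      simp [Matrix.transpose_add, Matrix.transpose_smul]
  rw [hPs, hPt]
  have hCC : C * C⁻¹ = 1 := Matrix.mul_nonsing_inv _ hdC
  calc A⁻¹ * B * Pim * (D * C⁻¹)
      = A⁻¹ * (B * Pim) * D * C⁻¹ := by noncomm_ring
    _ = A⁻¹ * (-(Pim * C)) * D * C⁻¹ := by rw [hBPi]
    _ = -(A⁻¹ * (Pim * (C * D * C⁻¹))) := by noncomm_ring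
    _ = -(A⁻¹ * (Pim * (D * (C * C⁻¹)))) := by rw [hCD, mul_assoc]
    _ = -(A⁻¹ * (Pim * D)) := by rw [hCC, mul_one]
    _ = A⁻¹ * (A * Pim) := by rw [hAPi]; noncomm_ring
    _ = (A⁻¹ * A) * Pim := by rw [mul_assoc]
    _ = Pim := by rw [Matrix.nonsing_inv_mul _ hdA, one_mul]
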